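/- arXiv:2106.15812 — 5 statements merged into one kernel-verified Lean document; each statement's English description precedes it below -/
import Mathlib

section
/- Let p be a random variable on [0,1] with a non-decreasing probability density function f, and let 0 < α_m ≤ λ < ν ≤ 1 with ζ = (ν - λ)/α_m. Then ζ·P(p ∈ [0, α_m]) ≤ P(p ∈ [λ, ν]). -/
/-!
On `[0, αₘ]` a non-decreasing density is at most `f αₘ`, so the red mass is at most `αₘ f(αₘ)`;
on `[λ, ν] ⊆ [αₘ, 1]` it is at least `f αₘ`, so the blue mass is at least `(ν - λ) f(αₘ)`.
Multiplying the first bound by `ζ = (ν - λ) / αₘ` makes the two bounds meet.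
-/

open Set MeasureTheory

section MonotoneOnIcc

variable {f : ℝ → ℝ} {a b : ℝ}

theorem MonotoneOn.setIntegral_Icc_le_mul (hf : MonotoneOn f (Icc a b)) (hab : a ≤ b) :
    ∫ x in Icc a b, f x ≤ (b - a) * f b := by
  have hb : b ∈ Icc a b := right_mem_Icc.2 hab
  calc ∫ x in Icc a b, f x ≤ ∫ _ in Icc a b, f b :=
        setIntegral_mono_on (hf.integrableOn_isCompact isCompact_Icc)
          (integrableOn_const measure_Icc_lt_top.ne) measurableSet_Icc
          fun x hx => hf hx hb hx.2
    _ = (b - a) * f b := by rw [setIntegral_const, Real.volume_real_Icc_of_le hab, smul_eq_mul]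

theorem MonotoneOn.mul_le_setIntegral_Icc (hf : MonotoneOn f (Icc a b)) (hab : a ≤ b) :
    (b - a) * f a ≤ ∫ x in Icc a b, f x := by
  have ha : a ∈ Icc a b := left_mem_Icc.2 hab
  have := setIntegral_ge_of_const_le_real measurableSet_Icc (measure_Icc_lt_top (μ := volume)).ne
    (fun x hx => hf ha hx hx.1) (hf.integrableOn_isCompact isCompact_Icc)
  rwa [Real.volume_real_Icc_of_le hab, mul_comm] at this

end MonotoneOnIcc

theorem blue_region_at_least_zeta_times_red_general
    (f : ℝ → ℝ) (hmono : MonotoneOn f (Icc (0:ℝ) 1))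
    (αm lam ν : ℝ) (h1 : 0 < αm) (h2 : αm ≤ lam) (h3 : lam < ν) (h4 : ν ≤ 1)
    (ζ : ℝ) (hζ : ζ = (ν - lam) / αm) :
    ζ * ∫ x in Icc (0:ℝ) αm, f x ≤ ∫ x in Icc lam ν, f x := by
  have hαm : αm ∈ Icc (0:ℝ) 1 := ⟨h1.le, by linarith⟩
  have hlam : lam ∈ Icc (0:ℝ) 1 := ⟨by linarith, by linarith⟩
  have hred : ∫ x in Icc (0:ℝ) αm, f x ≤ αm * f αm := by
    simpa using (hmono.mono (Icc_subset_Icc le_rfl hαm.2)).setIntegral_Icc_le_mul h1.le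
  have hblue : (ν - lam) * f lam ≤ ∫ x in Icc lam ν, f x :=
    (hmono.mono (Icc_subset_Icc hlam.1 h4)).mul_le_setIntegral_Icc h3.le
  have hζ0 : 0 ≤ ζ := hζ ▸ div_nonneg (sub_nonneg.2 h3.le) h1.le
  calc ζ * ∫ x in Icc (0:ℝ) αm, f x ≤ ζ * (αm * f αm) := mul_le_mul_of_nonneg_left hred hζ0
    _ = (ν - lam) * f αm := by rw [hζ]; field_simp
    _ ≤ (ν - lam) * f lam := mul_le_mul_of_nonneg_left (hmono hαm hlam h2) (sub_nonneg.2 h3.le)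
    _ ≤ ∫ x in Icc lam ν, f x := hblue

theorem blue_region_at_least_zeta_times_red
    (f : ℝ → ℝ) (hf0 : ∀ x, 0 ≤ f x) (hmono : MonotoneOn f (Icc (0:ℝ) 1))
    (hint : IntegrableOn f (Icc (0:ℝ) 1))
    (hdens : ∫ x in Icc (0:ℝ) 1, f x = 1)
    (αm lam ν : ℝ) (h1 : 0 < αm) (h2 : αm ≤ lam) (h3 : lam < ν) (h4 : ν ≤ 1)
    (ζ : ℝ) (hζ : ζ = (ν - lam) / αm) :
    ζ * ∫ x in Icc (0:ℝ) αm, f x ≤ ∫ x in Icc lam ν, f x :=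
  blue_region_at_least_zeta_times_red_general f hmono αm lam ν h1 h2 h3 h4 ζ hζ
end

section
/- Let p be a random variable on [0,1] with non-decreasing density, let 0 < α_m ≤ λ < ν ≤ 1 and ζ = (ν - λ)/α_m, and suppose P(p ∈ [0, α_m] ∪ [λ, ν]) > 0. Then the conditional probability P(p ∈ [λ, ν] | p ∈ [0, α_m] ∪ [λ, ν]) ≥ ζ/(1 + ζ). -/
/-! On `[0, αm]` a non-decreasing density is at most `f λ`, and on `[λ, ν]` it is at least
`f λ`, so `∫_{[0,αm]} f ≤ αm f(λ)` and `(ν - λ) f(λ) ≤ ∫_{[λ,ν]} f`. Hence `ζ A ≤ B` for the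
two masses `A`, `B`, which is equivalent to `ζ / (1 + ζ) ≤ B / (A + B)`. -/

open Set MeasureTheory

section IccIntegral

variable {f : ℝ → ℝ} {a b c d M : ℝ}

theorem setIntegral_Icc_le_mul_of_le (hab : a ≤ b) (hf : IntegrableOn f (Icc a b))
    (h : ∀ x ∈ Icc a b, f x ≤ M) : ∫ x in Icc a b, f x ≤ (b - a) * M := by
  calc ∫ x in Icc a b, f x ≤ ∫ _ in Icc a b, M :=
        setIntegral_mono_on hf (integrableOn_const (by simp) (by simp)) measurableSet_Icc h
    _ = (b - a) * M := by simp [Real.volume_real_Icc_of_le hab]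

theorem mul_le_setIntegral_Icc_of_le (hab : a ≤ b) (hf : IntegrableOn f (Icc a b))
    (h : ∀ x ∈ Icc a b, M ≤ f x) : (b - a) * M ≤ ∫ x in Icc a b, f x := by
  calc (b - a) * M = ∫ _ in Icc a b, M := by simp [Real.volume_real_Icc_of_le hab]
    _ ≤ ∫ x in Icc a b, f x :=
        setIntegral_mono_on (integrableOn_const (by simp) (by simp)) hf measurableSet_Icc h

theorem setIntegral_Icc_union_Icc (hbc : b ≤ c) (hab : IntegrableOn f (Icc a b))
    (hcd : IntegrableOn f (Icc c d)) :
    ∫ x in Icc a b ∪ Icc c d, f x = (∫ x in Icc a b, f x) + ∫ x in Icc c d, f x := by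
  have hdisj : AEDisjoint volume (Icc a b) (Icc c d) := by
    refine measure_mono_null (fun x hx => ?_) (measure_singleton c)
    exact le_antisymm (hx.1.2.trans hbc) hx.2.1
  exact setIntegral_union₀ hdisj measurableSet_Icc.nullMeasurableSet hab hcd

theorem MonotoneOn.mul_setIntegral_Icc_le_mul_setIntegral_Icc (hf : MonotoneOn f (Icc a d))
    (hint : IntegrableOn f (Icc a d)) (hab : a ≤ b) (hbc : b ≤ c) (hcd : c ≤ d) :
    (d - c) * ∫ x in Icc a b, f x ≤ (b - a) * ∫ x in Icc c d, f x := by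
  have hc : c ∈ Icc a d := ⟨hab.trans hbc, hcd⟩
  have hleft : ∫ x in Icc a b, f x ≤ (b - a) * f c :=
    setIntegral_Icc_le_mul_of_le hab (hint.mono_set (Icc_subset_Icc_right (hbc.trans hcd)))
      fun x hx => hf ⟨hx.1, hx.2.trans (hbc.trans hcd)⟩ hc (hx.2.trans hbc)
  have hright : (d - c) * f c ≤ ∫ x in Icc c d, f x :=
    mul_le_setIntegral_Icc_of_le hcd (hint.mono_set (Icc_subset_Icc_left (hab.trans hbc)))
      fun x hx => hf hc ⟨(hab.trans hbc).trans hx.1, hx.2⟩ hx.1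
  calc (d - c) * ∫ x in Icc a b, f x ≤ (d - c) * ((b - a) * f c) :=
        mul_le_mul_of_nonneg_left hleft (sub_nonneg.2 hcd)
    _ = (b - a) * ((d - c) * f c) := by ring
    _ ≤ (b - a) * ∫ x in Icc c d, f x := mul_le_mul_of_nonneg_left hright (sub_nonneg.2 hab)

end IccIntegral

theorem div_one_add_le_div_add_of_mul_le {ζ A B : ℝ} (hζ : 0 ≤ ζ) (hAB : 0 < A + B)
    (h : ζ * A ≤ B) : ζ / (1 + ζ) ≤ B / (A + B) := by
  rw [div_le_div_iff₀ (by linarith) hAB]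
  linarith

theorem masked_null_blue_conditional_prob_general
    (f : ℝ → ℝ) (hmono : MonotoneOn f (Icc (0:ℝ) 1))
    (hint : IntegrableOn f (Icc (0:ℝ) 1))
    (αm lam ν : ℝ) (h1 : 0 < αm) (h2 : αm ≤ lam) (h3 : lam < ν) (h4 : ν ≤ 1)
    (ζ : ℝ) (hζ : ζ = (ν - lam) / αm)
    (hpos : 0 < ∫ x in Icc (0:ℝ) αm ∪ Icc lam ν, f x) :
    ζ / (1 + ζ) ≤
      (∫ x in Icc lam ν, f x) / ∫ x in Icc (0:ℝ) αm ∪ Icc lam ν, f x := by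
  have hsub : Icc (0:ℝ) ν ⊆ Icc 0 1 := Icc_subset_Icc_right h4
  have hmass : (ν - lam) * (∫ x in Icc (0:ℝ) αm, f x) ≤ αm * ∫ x in Icc lam ν, f x := by
    simpa only [sub_zero] using (hmono.mono hsub).mul_setIntegral_Icc_le_mul_setIntegral_Icc
      (hint.mono_set hsub) h1.le h2 h3.le
  have hintA : IntegrableOn f (Icc 0 αm) :=
    hint.mono_set (Icc_subset_Icc_right (h2.trans (h3.le.trans h4)))
  have hintB : IntegrableOn f (Icc lam ν) := hint.mono_set (Icc_subset_Icc (h1.le.trans h2) h4)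
  rw [setIntegral_Icc_union_Icc h2 hintA hintB] at hpos ⊢
  refine div_one_add_le_div_add_of_mul_le (hζ ▸ div_nonneg (sub_nonneg.2 h3.le) h1.le) hpos ?_
  rwa [hζ, div_mul_eq_mul_div, div_le_iff₀ h1, mul_comm _ αm]

theorem masked_null_blue_conditional_prob
    (f : ℝ → ℝ) (hf0 : ∀ x, 0 ≤ f x) (hmono : MonotoneOn f (Icc (0:ℝ) 1))
    (hint : IntegrableOn f (Icc (0:ℝ) 1))
    (hdens : ∫ x in Icc (0:ℝ) 1, f x = 1)
    (αm lam ν : ℝ) (h1 : 0 < αm) (h2 : αm ≤ lam) (h3 : lam < ν) (h4 : ν ≤ 1)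
    (ζ : ℝ) (hζ : ζ = (ν - lam) / αm)
    (hpos : 0 < ∫ x in Icc (0:ℝ) αm ∪ Icc lam ν, f x) :
    ζ / (1 + ζ) ≤
      (∫ x in Icc lam ν, f x) / ∫ x in Icc (0:ℝ) αm ∪ Icc lam ν, f x :=
  masked_null_blue_conditional_prob_general f hmono hint αm lam ν h1 h2 h3 h4 ζ hζ hpos
end

section
/- Let Z ~ N(θ, σ²) with σ > 0 and θ ≤ 0, and let p = 1 - Φ(Z/σ) be the one-sided p-value, where Φ is the standard normal CDF. Then p has a non-decreasing density on (0,1). Explicitly, the density of p at u ∈ (0,1) is φ(Φ⁻¹(1-u) - θ/σ)/φ(Φ⁻¹(1-u)), which is non-decreasing in u when θ ≤ 0. -/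
/-! Dividing by `σ` standardizes `Z` to `N(c, 1)` with `c = θ / σ`. The map `w ↦ 1 - Φ w` is a
decreasing bijection of `ℝ` onto `(0, 1)` with derivative `-φ`, so by the change of variables
formula `p` has density `φ(x - c) / φ(x)` at `u = 1 - Φ x`, i.e. at `x = Φ⁻¹(1 - u)`. This
likelihood ratio equals `exp (c x - c² / 2)`, which is non-increasing in `x` when `c ≤ 0`, while
`Φ⁻¹(1 - u)` is decreasing in `u`. -/

open Set MeasureTheory ProbabilityTheory

namespace ProbabilityTheory

variable {μ : ℝ} {v : NNReal}

lemma continuous_gaussianPDFReal (μ : ℝ) (v : NNReal) : Continuous (gaussianPDFReal μ v) := by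
  rw [gaussianPDFReal_def]
  fun_prop

lemma cdf_gaussianReal_eq_integral (hv : v ≠ 0) (x : ℝ) :
    cdf (gaussianReal μ v) x = ∫ t in Iic x, gaussianPDFReal μ v t := by
  rw [cdf_eq_real, measureReal_def, gaussianReal_apply_eq_integral μ hv,
    ENNReal.toReal_ofReal (integral_nonneg fun t => gaussianPDFReal_nonneg μ v t)]

lemma cdf_gaussianReal_sub_cdf (hv : v ≠ 0) (a b : ℝ) :
    cdf (gaussianReal μ v) b - cdf (gaussianReal μ v) a = ∫ t in a..b, gaussianPDFReal μ v t := by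
  rw [cdf_gaussianReal_eq_integral hv, cdf_gaussianReal_eq_integral hv]
  exact intervalIntegral.integral_Iic_sub_Iic (integrable_gaussianPDFReal μ v).integrableOn
    (integrable_gaussianPDFReal μ v).integrableOn

lemma hasDerivAt_cdf_gaussianReal (hv : v ≠ 0) (x : ℝ) :
    HasDerivAt (cdf (gaussianReal μ v)) (gaussianPDFReal μ v x) x := by
  have hFTC := intervalIntegral.integral_hasDerivAt_right
    ((integrable_gaussianPDFReal μ v).intervalIntegrable (a := 0) (b := x))
    (continuous_gaussianPDFReal μ v).stronglyMeasurable.stronglyMeasurableAtFilter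
    (continuous_gaussianPDFReal μ v).continuousAt
  refine (hFTC.const_add (cdf (gaussianReal μ v) 0)).congr_of_eventuallyEq
    (Filter.Eventually.of_forall fun y => ?_)
  simp only [← cdf_gaussianReal_sub_cdf hv, add_sub_cancel]

lemma strictMono_cdf_gaussianReal (hv : v ≠ 0) : StrictMono (cdf (gaussianReal μ v)) := by
  intro a b hab
  rw [← sub_pos, cdf_gaussianReal_sub_cdf hv]
  exact intervalIntegral.intervalIntegral_pos_of_pos
    (integrable_gaussianPDFReal μ v).intervalIntegrable
    (fun t => gaussianPDFReal_pos μ v t hv) hab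

lemma cdf_gaussianReal_mem_Ioo (hv : v ≠ 0) (x : ℝ) : cdf (gaussianReal μ v) x ∈ Ioo 0 1 :=
  ⟨(cdf_nonneg _ (x - 1)).trans_lt (strictMono_cdf_gaussianReal hv (sub_one_lt x)),
    (strictMono_cdf_gaussianReal hv (lt_add_one x)).trans_le (cdf_le_one _ (x + 1))⟩

lemma gaussianReal_map_div_const_of_var_eq_sq {σ : ℝ} (hσ : σ ≠ 0) :
    (gaussianReal μ (σ ^ 2).toNNReal).map (· / σ) = gaussianReal (μ / σ) 1 := by
  rw [gaussianReal_map_div_const]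
  congr
  ext
  simp [max_eq_left (sq_nonneg σ), hσ]

lemma gaussianPDFReal_zero_one_sub (x c : ℝ) :
    gaussianPDFReal 0 1 (x - c) = Real.exp (c * x - c ^ 2 / 2) * gaussianPDFReal 0 1 x := by
  simp only [gaussianPDFReal, NNReal.coe_one, mul_one, sub_zero]
  rw [mul_left_comm, ← Real.exp_add]
  ring_nf

lemma antitone_gaussianPDFReal_sub_div {c : ℝ} (hc : c ≤ 0) :
    Antitone fun x => gaussianPDFReal 0 1 (x - c) / gaussianPDFReal 0 1 x := by
  intro x y hxy
  simp only [gaussianPDFReal_zero_one_sub,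
    mul_div_cancel_right₀ _ (gaussianPDFReal_pos 0 1 _ one_ne_zero).ne']
  exact Real.exp_le_exp.2 (by nlinarith)

end ProbabilityTheory

lemma antitoneOn_comp_one_sub_of_rightInvOn {Φ Φinv : ℝ → ℝ} (hΦ : Monotone Φ)
    (hΦinv : RightInvOn Φinv Φ (Ioo 0 1)) : AntitoneOn (fun u => Φinv (1 - u)) (Ioo 0 1) :=
  fun _ hu _ hv huv =>
    Function.monotoneOn_of_rightInvOn_of_mapsTo (hΦ.monotoneOn univ) hΦinv (mapsTo_univ _ _)
      (Ioo.one_sub_mem hv) (Ioo.one_sub_mem hu) (sub_le_sub_left huv 1)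

lemma map_withDensity_eq_restrict_range_withDensity {g g' : ℝ → ℝ} {f ρ : ℝ → ENNReal}
    (hg : ∀ x, HasDerivAt g (g' x) x) (hg_inj : Function.Injective g)
    (hρ : ∀ x, ENNReal.ofReal |g' x| * ρ (g x) = f x) :
    (volume.withDensity f).map g = (volume.restrict (range g)).withDensity ρ := by
  have hg_meas : Measurable g :=
    (continuous_iff_continuousAt.2 fun x => (hg x).continuousAt).measurable
  ext s hs
  rw [Measure.map_apply hg_meas hs, withDensity_apply _ (hg_meas hs), withDensity_apply _ hs,
    Measure.restrict_restrict hs, ← image_preimage_eq_inter_range,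
    lintegral_image_eq_lintegral_abs_deriv_mul (hg_meas hs)
      (fun x _ => (hg x).hasDerivWithinAt) hg_inj.injOn]
  simp only [hρ]

lemma map_one_sub_cdf_gaussianReal {Φinv h : ℝ → ℝ} {c : ℝ}
    (hΦinv : RightInvOn Φinv (cdf (gaussianReal 0 1)) (Ioo 0 1))
    (hh : ∀ u ∈ Ioo (0 : ℝ) 1,
      h u = gaussianPDFReal 0 1 (Φinv (1 - u) - c) / gaussianPDFReal 0 1 (Φinv (1 - u))) :
    (gaussianReal c 1).map (fun w => 1 - cdf (gaussianReal 0 1) w) =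
      volume.withDensity (fun u => ENNReal.ofReal ((Ioo 0 1).indicator h u)) := by
  set Φ := cdf (gaussianReal 0 1)
  have hΦ_mono : StrictMono Φ := strictMono_cdf_gaussianReal one_ne_zero
  have hΦ_mem : ∀ x, Φ x ∈ Ioo 0 1 := cdf_gaussianReal_mem_Ioo one_ne_zero
  have h_range : range (fun w => 1 - Φ w) = Ioo 0 1 :=
    Subset.antisymm (range_subset_iff.2 fun x => Ioo.one_sub_mem (hΦ_mem x))
      fun u hu => ⟨Φinv (1 - u), by simp only [hΦinv (Ioo.one_sub_mem hu), sub_sub_cancel]⟩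
  -- the Jacobian of `w ↦ 1 - Φ w` cancels the denominator of the likelihood ratio `h`
  have h_density : ∀ x, ENNReal.ofReal |-gaussianPDFReal 0 1 x| * ENNReal.ofReal (h (1 - Φ x))
      = gaussianPDF c 1 x := by
    intro x
    have hpos := gaussianPDFReal_pos 0 1 x one_ne_zero
    rw [hh _ (Ioo.one_sub_mem (hΦ_mem x)), sub_sub_cancel,
      hΦ_mono.injective (hΦinv (hΦ_mem x)), abs_neg, abs_of_pos hpos,
      ← ENNReal.ofReal_mul hpos.le, mul_div_cancel₀ _ hpos.ne', gaussianPDF,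
      gaussianPDFReal_sub, zero_add]
  rw [gaussianReal_of_var_ne_zero _ one_ne_zero,
    map_withDensity_eq_restrict_range_withDensity (ρ := fun u => ENNReal.ofReal (h u))
      (fun x => (hasDerivAt_cdf_gaussianReal one_ne_zero x).const_sub 1)
      (fun x y hxy => hΦ_mono.injective (sub_right_injective hxy)) h_density,
    h_range, ← withDensity_indicator measurableSet_Ioo]
  exact congrArg _ (indicator_comp_of_zero ENNReal.ofReal_zero)

theorem one_sided_pvalue_density_nondecreasing
    (θ σ : ℝ) (hσ : 0 < σ) (hθ : θ ≤ 0)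
    (Φ : ℝ → ℝ) (hΦ : Φ = fun z => cdf (gaussianReal 0 1) z)
    (Φinv : ℝ → ℝ) (hΦinv : ∀ u ∈ Ioo (0:ℝ) 1, Φ (Φinv u) = u)
    (h : ℝ → ℝ)
    (hh : ∀ u ∈ Ioo (0:ℝ) 1,
      h u = gaussianPDFReal 0 1 (Φinv (1 - u) - θ / σ) / gaussianPDFReal 0 1 (Φinv (1 - u))) :
    MonotoneOn h (Ioo (0:ℝ) 1) ∧
    Measure.map (fun z => 1 - Φ (z / σ)) (gaussianReal θ ((σ ^ 2).toNNReal)) =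
      volume.withDensity (fun u => ENNReal.ofReal (Set.indicator (Ioo (0:ℝ) 1) h u)) := by
  subst hΦ
  beta_reduce
  have hc : θ / σ ≤ 0 := div_nonpos_of_nonpos_of_nonneg hθ hσ.le
  refine ⟨((antitone_gaussianPDFReal_sub_div hc).comp_antitoneOn
    (antitoneOn_comp_one_sub_of_rightInvOn (monotone_cdf _) hΦinv)).congr
      fun u hu => (hh u hu).symm, ?_⟩
  rw [show (fun z => 1 - cdf (gaussianReal 0 1) (z / σ))
      = (fun w => 1 - cdf (gaussianReal 0 1) w) ∘ (· / σ) from rfl,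
    ← Measure.map_map ((monotone_cdf _).measurable.const_sub 1) (measurable_div_const σ),
    gaussianReal_map_div_const_of_var_eq_sq hσ.ne']
  exact map_one_sub_cdf_gaussianReal hΦinv hh
end

section
/- Let Z ~ N(θ, σ²), σ > 0, and for δ ≥ 0 define the interval-null p-value p = 1 - Φ(|Z|/σ + δ) + Φ(-|Z|/σ + δ). Then for any θ with |θ| ≤ δσ, p is super-uniform: P(p ≤ t) ≤ t for all t ∈ [0,1]; in particular, when |θ/σ| = δ, the statistic p = 1 - Φ(|Z|/σ + δ) + Φ(-|Z|/σ + δ) satisfies P(p ≤ t) ≤ t for all t. -/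
open Set MeasureTheory ProbabilityTheory

open Set MeasureTheory ProbabilityTheory Filter Real

namespace IntervalNullAux

noncomputable abbrev ϕ : ℝ → ℝ := gaussianPDFReal 0 1
noncomputable abbrev Ψ : ℝ → ℝ := cdf (gaussianReal 0 1)

lemma phi_int : Integrable ϕ := integrable_gaussianPDFReal 0 1

lemma phi_even (x : ℝ) : ϕ (-x) = ϕ x := by
  simp [ϕ, gaussianPDFReal, neg_sq]

lemma Psi_eq (a : ℝ) : Ψ a = ∫ x in Iic a, ϕ x := by
  have h1 := (ofReal_cdf (μ := gaussianReal 0 1) a)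
  rw [gaussianReal_apply_eq_integral 0 one_ne_zero (Iic a)] at h1
  have h2 : 0 ≤ ∫ x in Iic a, ϕ x :=
    setIntegral_nonneg measurableSet_Iic fun x _ => gaussianPDFReal_nonneg 0 1 x
  exact (ENNReal.ofReal_eq_ofReal_iff (cdf_nonneg _ a) h2).mp h1

lemma Psi_sub (a b : ℝ) : Ψ b - Ψ a = ∫ x in a..b, ϕ x := by
  rw [Psi_eq, Psi_eq]
  exact intervalIntegral.integral_Iic_sub_Iic phi_int.integrableOn phi_int.integrableOn

lemma int_Ioi (a : ℝ) : ∫ x in Ioi a, ϕ x = 1 - Ψ a := by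
  have h := intervalIntegral.integral_Iic_add_Ioi (b := a) (f := ϕ) phi_int.integrableOn phi_int.integrableOn
  rw [integral_gaussianPDFReal_eq_one 0 one_ne_zero] at h
  rw [← Psi_eq] at h
  linarith

lemma Psi_neg (a : ℝ) : Ψ (-a) = 1 - Ψ a := by
  have h1 : ∫ x in Iic (-a), ϕ (-x) = ∫ x in Ioi a, ϕ x := by
    simpa using integral_comp_neg_Iic (-a) ϕ
  simp_rw [phi_even] at h1
  rw [Psi_eq, h1, int_Ioi]

lemma Psi_strictMono : StrictMono Ψ := by
  intro a b hab
  have h := intervalIntegral.intervalIntegral_pos_of_pos (f := ϕ) phi_int.intervalIntegrable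
    (fun x => gaussianPDFReal_pos 0 1 x one_ne_zero) hab
  have h2 := Psi_sub a b
  linarith

lemma Psi_pos (a : ℝ) : 0 < Ψ a := by
  have h := Psi_strictMono (show a - 1 < a by linarith)
  have := cdf_nonneg (gaussianReal 0 1) (a - 1)
  linarith

lemma Psi_continuous : Continuous Ψ := by
  have h := phi_int.continuous_primitive 0
  have he : Ψ = fun b => Ψ 0 + ∫ x in (0:ℝ)..b, ϕ x := by
    funext b
    have := Psi_sub 0 b
    linarith
  rw [he]
  exact continuous_const.add h

lemma phi_shift_le (c x : ℝ) (hc : 0 ≤ c) (hx : -c ≤ x) : ϕ (x + 2 * c) ≤ ϕ x := by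
  have key : (x - 0)^2 ≤ (x + 2*c - 0)^2 := by nlinarith
  show (√(2 * π * (1:NNReal)))⁻¹ * rexp (- (x + 2*c - 0)^2 / (2 * (1:NNReal))) ≤
    (√(2 * π * (1:NNReal)))⁻¹ * rexp (- (x - 0)^2 / (2 * (1:NNReal)))
  have h1 : (0:ℝ) ≤ (√(2 * π * (1:NNReal)))⁻¹ := by positivity
  apply mul_le_mul_of_nonneg_left _ h1
  apply Real.exp_le_exp.mpr
  have h2 : (0:ℝ) ≤ 2 * (1:NNReal) := by norm_num
  apply div_le_div_of_nonneg_right ?_ h2 |>.trans_eq rfl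
  linarith

lemma key_ineq (c m δ' : ℝ) (hc : 0 ≤ c) (hm : 0 ≤ m) (hmδ : m ≤ δ') :
    Ψ (m - c) + Ψ (-m - c) ≤ Ψ (δ' - c) + Ψ (-δ' - c) := by
  have hA : Ψ (δ' - c) - Ψ (m - c) = ∫ x in (m - c)..(δ' - c), ϕ x := Psi_sub _ _
  have hB : Ψ (-m - c) - Ψ (-δ' - c) = ∫ x in (-δ' - c)..(-m - c), ϕ x := Psi_sub _ _
  have hB2 : ∫ x in (-δ' - c)..(-m - c), ϕ x = ∫ x in (m + c)..(δ' + c), ϕ x := by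
    have := intervalIntegral.integral_comp_neg (a := m + c) (b := δ' + c) ϕ
    simp_rw [phi_even] at this
    rw [this]
    congr 1 <;> ring
  have hB3 : ∫ x in (m + c)..(δ' + c), ϕ x = ∫ x in (m - c)..(δ' - c), ϕ (x + 2 * c) := by
    rw [intervalIntegral.integral_comp_add_right ϕ (2 * c)]
    congr 1 <;> ring
  have hmono : ∫ x in (m - c)..(δ' - c), ϕ (x + 2 * c) ≤ ∫ x in (m - c)..(δ' - c), ϕ x := by
    apply intervalIntegral.integral_mono_on (by linarith)
      ((phi_int.comp_add_right (2 * c)).intervalIntegrable) phi_int.intervalIntegrable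
    intro x hx
    exact phi_shift_le c x hc (by have := hx.1; linarith)
  linarith

lemma map_eq (θ σ : ℝ) (hσ : 0 < σ) :
    gaussianReal θ ((σ^2).toNNReal) = (gaussianReal 0 1).map (fun x => σ * x + θ) := by
  have h1 : (gaussianReal 0 1).map (fun x => σ * x) = gaussianReal 0 ⟨σ^2, sq_nonneg σ⟩ := by
    rw [gaussianReal_map_const_mul]
    congr 1
    · simp
    · ext
      simp
      rfl
  have h2 : ((gaussianReal 0 ⟨σ^2, sq_nonneg σ⟩).map (fun x => x + θ))
      = gaussianReal θ ⟨σ^2, sq_nonneg σ⟩ := by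
    simpa using gaussianReal_map_add_const (μ := 0) (v := ⟨σ^2, sq_nonneg σ⟩) θ
  have h3 : (σ^2).toNNReal = (⟨σ^2, sq_nonneg σ⟩ : NNReal) := by
    ext
    simp [Real.coe_toNNReal _ (sq_nonneg σ)]
    rfl
  rw [h3, ← h2, ← h1,
    Measure.map_map (by fun_prop : Measurable fun x : ℝ => x + θ) (by fun_prop : Measurable fun x : ℝ => σ * x)]
  rfl

lemma mu_Iic (θ σ : ℝ) (hσ : 0 < σ) (a : ℝ) :
    gaussianReal θ ((σ^2).toNNReal) (Iic a) = ENNReal.ofReal (Ψ ((a - θ)/σ)) := by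
  rw [map_eq θ σ hσ, Measure.map_apply (by fun_prop) measurableSet_Iic]
  have hp : (fun x => σ * x + θ) ⁻¹' Iic a = Iic ((a - θ)/σ) := by
    ext x
    simp only [mem_preimage, mem_Iic]
    rw [le_div_iff₀ hσ]
    constructor <;> intro h <;> nlinarith
  rw [hp, ← ofReal_cdf]

lemma mu_Ici (θ σ : ℝ) (hσ : 0 < σ) (a : ℝ) :
    gaussianReal θ ((σ^2).toNNReal) (Ici a) = ENNReal.ofReal (1 - Ψ ((a - θ)/σ)) := by
  rw [map_eq θ σ hσ, Measure.map_apply (by fun_prop) measurableSet_Ici]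
  have hp : (fun x => σ * x + θ) ⁻¹' Ici a = Ici ((a - θ)/σ) := by
    ext x
    simp only [mem_preimage, mem_Ici]
    rw [div_le_iff₀ hσ]
    constructor <;> intro h <;> nlinarith
  rw [hp, gaussianReal_apply_eq_integral 0 one_ne_zero, integral_Ici_eq_integral_Ioi, int_Ioi]

end IntervalNullAux

theorem interval_null_pvalue_superuniform
    (θ σ δ : ℝ) (hσ : 0 < σ) (hδ : 0 ≤ δ) (hθ : |θ| ≤ δ * σ)
    (Φ : ℝ → ℝ) (hΦ : Φ = fun z => cdf (gaussianReal 0 1) z) :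
    ∀ t ∈ Icc (0:ℝ) 1,
      gaussianReal θ ((σ ^ 2).toNNReal)
          {z | 1 - Φ (|z| / σ + δ) + Φ (-(|z| / σ) + δ) ≤ t}
        ≤ ENNReal.ofReal t := by
  intro t ht
  obtain ⟨ht0, ht1⟩ := ht
  have hΦΨ : ∀ x, Φ x = IntervalNullAux.Ψ x := fun x => by rw [hΦ]
  rcases eq_or_lt_of_le ht0 with h0 | h0
  · -- t = 0 : the set is empty
    have hempty : {z : ℝ | 1 - Φ (|z| / σ + δ) + Φ (-(|z| / σ) + δ) ≤ t} = ∅ := by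
      apply eq_empty_of_forall_notMem
      intro z hz
      simp only [mem_setOf_eq, hΦΨ] at hz
      have h1 := IntervalNullAux.Psi_pos (-(|z| / σ) + δ)
      have h2 := cdf_le_one (gaussianReal 0 1) (|z| / σ + δ)
      have : (0:ℝ) < 1 - IntervalNullAux.Ψ (|z| / σ + δ) + IntervalNullAux.Ψ (-(|z| / σ) + δ) := by
        have : IntervalNullAux.Ψ (|z| / σ + δ) ≤ 1 := h2
        linarith
      rw [← h0] at hz
      linarith
    rw [hempty]
    simp
  -- 0 < t ≤ 1
  set Ψ := IntervalNullAux.Ψ with hΨdef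
  set g : ℝ → ℝ := fun u => 1 - Ψ (u + δ) + Ψ (-u + δ) with hg
  have hganti : StrictAnti g := by
    intro a b hab
    have h1 := IntervalNullAux.Psi_strictMono (show a + δ < b + δ by linarith)
    have h2 := IntervalNullAux.Psi_strictMono (show -b + δ < -a + δ by linarith)
    simp only [hg]
    linarith
  have hg0 : g 0 = 1 := by simp [hg]
  -- g tends to 0 at ∞
  have htend : Tendsto g atTop (nhds 0) := by
    have h1 : Tendsto (fun u : ℝ => Ψ (u + δ)) atTop (nhds 1) :=
      (tendsto_cdf_atTop _).comp (tendsto_atTop_add_const_right _ δ tendsto_id)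
    have h2 : Tendsto (fun u : ℝ => Ψ (-u + δ)) atTop (nhds 0) :=
      (tendsto_cdf_atBot _).comp
        (tendsto_atBot_add_const_right _ δ tendsto_neg_atTop_atBot)
    have h3 := (((tendsto_const_nhds : Tendsto (fun _ : ℝ => (1:ℝ)) atTop (nhds 1))).sub h1).add h2
    simpa using h3
  obtain ⟨u₀, hu₀⟩ := (htend.eventually_lt_const h0).exists
  set u₁ : ℝ := max u₀ 0 with hu₁
  have hgu₁ : g u₁ < t := lt_of_le_of_lt (hganti.antitone (le_max_left _ _)) hu₀
  have hgcont : Continuous g := by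
    have hc := IntervalNullAux.Psi_continuous
    exact (continuous_const.sub (hc.comp (continuous_id.add continuous_const))).add
      (hc.comp (continuous_id.neg.add continuous_const))
  obtain ⟨c, hcmem, hct⟩ := intermediate_value_Icc' (le_max_right u₀ 0) hgcont.continuousOn
    (show t ∈ Icc (g u₁) (g 0) from ⟨hgu₁.le, hg0 ▸ ht1⟩)
  obtain ⟨hc0, _⟩ := hcmem
  -- subset
  have hsub : {z : ℝ | 1 - Φ (|z| / σ + δ) + Φ (-(|z| / σ) + δ) ≤ t}
      ⊆ Ici (c * σ) ∪ Iic (-(c * σ)) := by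
    intro z hz
    simp only [mem_setOf_eq, hΦΨ] at hz
    have hz' : g (|z| / σ) ≤ g c := by rw [hct]; exact hz
    have hcz : c ≤ |z| / σ := by
      by_contra h
      push_neg at h
      exact absurd hz' (not_le.mpr (hganti h))
    have habs : c * σ ≤ |z| := by
      rw [le_div_iff₀ hσ] at hcz
      linarith
    rcases le_abs.mp habs with h | h
    · exact Or.inl h
    · exact Or.inr (by simpa using (by linarith : z ≤ -(c * σ)))
  set m := θ / σ with hm
  have hmabs : |m| ≤ δ := by
    rw [hm, abs_div, abs_of_pos hσ, div_le_iff₀ hσ]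
    linarith [hθ]
  have hIci : gaussianReal θ ((σ ^ 2).toNNReal) (Ici (c * σ))
      = ENNReal.ofReal (1 - Ψ (c - m)) := by
    rw [IntervalNullAux.mu_Ici θ σ hσ]
    congr 2
    rw [hm, sub_div, mul_div_cancel_right₀ _ hσ.ne']
  have hIic : gaussianReal θ ((σ ^ 2).toNNReal) (Iic (-(c * σ)))
      = ENNReal.ofReal (Ψ (-c - m)) := by
    rw [IntervalNullAux.mu_Iic θ σ hσ]
    congr 2
    rw [hm, sub_div, neg_div, mul_div_cancel_right₀ _ hσ.ne']
  -- real inequality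
  have hreal : (1 - Ψ (c - m)) + Ψ (-c - m) ≤ t := by
    have hsym1 : 1 - Ψ (c - m) = Ψ (m - c) := by
      have := IntervalNullAux.Psi_neg (c - m)
      rw [show -(c - m) = m - c by ring] at this
      linarith
    have hkey := IntervalNullAux.key_ineq c |m| δ hc0 (abs_nonneg m) hmabs
    have hswap : Ψ (m - c) + Ψ (-m - c) = Ψ (|m| - c) + Ψ (-|m| - c) := by
      rcases abs_cases m with ⟨he, _⟩ | ⟨he, _⟩
      · rw [he]
      · rw [he, show -(-m) - c = m - c by ring]
        ring
    have hgc : g c = 1 - Ψ (c + δ) + Ψ (-c + δ) := rfl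
    have hsym2 : Ψ (-δ - c) = 1 - Ψ (δ + c) := by
      have := IntervalNullAux.Psi_neg (δ + c)
      rw [show -(δ + c) = -δ - c by ring] at this
      linarith
    have hsym3 : Ψ (δ - c) = Ψ (-c + δ) := by rw [show δ - c = -c + δ by ring]
    have hcomm : Ψ (-c - m) = Ψ (-m - c) := by rw [show -c - m = -m - c by ring]
    rw [← hct, hgc]
    rw [show c + δ = δ + c by ring]
    linarith
  calc gaussianReal θ ((σ ^ 2).toNNReal)
        {z | 1 - Φ (|z| / σ + δ) + Φ (-(|z| / σ) + δ) ≤ t}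
      ≤ gaussianReal θ ((σ ^ 2).toNNReal) (Ici (c * σ) ∪ Iic (-(c * σ))) :=
        measure_mono hsub
    _ ≤ gaussianReal θ ((σ ^ 2).toNNReal) (Ici (c * σ))
        + gaussianReal θ ((σ ^ 2).toNNReal) (Iic (-(c * σ))) := measure_union_le _ _
    _ = ENNReal.ofReal ((1 - Ψ (c - m)) + Ψ (-c - m)) := by
        rw [hIci, hIic, ENNReal.ofReal_add ?_ (cdf_nonneg _ _)]
        have := cdf_le_one (gaussianReal 0 1) (c - m)
        linarith
    _ ≤ ENNReal.ofReal t := ENNReal.ofReal_le_ofReal hreal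
end

section
/- Let Z ~ N(θ, σ²) with θ = 0 and σ > 0, let p = 2(1 - Φ(|Z|/σ)) be the two-sided p-value, b = 1{p ∈ [λ,ν]} for masking parameters 0 < α_m ≤ λ < ν ≤ 1, and s = sgn(Z)·(-1)^b. Then conditional on the event p ∈ [0,α_m] ∪ [λ,ν] and on the masked value m = g(p), the sign variable s is independent of b, and s is uniform on {-1, +1}. -/
/-!
Negation `z ↦ -z` preserves the centred Gaussian law and fixes `p`, hence `b`, `g(p)` and the
selection event `E`, while it flips `sgn z` and therefore `s`. Conditioning on the symmetric event
`E` keeps the law negation-invariant, so for every symmetric event `B` the two sets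
`{s = 1} ∩ B` and `{s = -1} ∩ B` are exchanged by negation and have equal mass; as `s = ±1` almost
surely, each carries half of `B`. Taking `B` the whole space gives uniformity, taking `B` an event
in `(b, g(p))` gives independence. The conditioning is not degenerate because `α_m > 0`: `E`
contains every `z` with `|z|` large.
-/

open Set MeasureTheory ProbabilityTheory
open scoped Classical

/-- The tent masking function. -/
noncomputable def maskFun (lam ν ζ : ℝ) (p : ℝ) : ℝ :=
  if p ∈ Icc lam ν then (ν - p) / ζ else p

lemma Real.measurable_sign : Measurable Real.sign :=
  Measurable.ite measurableSet_Iio measurable_const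
    (Measurable.ite measurableSet_Ioi measurable_const measurable_const)

lemma Function.Even.neg_preimage {α β : Type*} [InvolutiveNeg α] {f : α → β} (hf : f.Even)
    (s : Set β) : -(f ⁻¹' s) = f ⁻¹' s := by
  ext x
  simp only [mem_neg, mem_preimage, hf x]

namespace MeasureTheory.Measure

variable {α : Type*} [MeasurableSpace α] [InvolutiveNeg α] [MeasurableNeg α] {μ : Measure α}

lemma IsNegInvariant.cond [μ.IsNegInvariant] {s : Set α} (hs : -s = s) :
    (μ[|s]).IsNegInvariant := by
  refine ⟨Measure.ext fun t ht => ?_⟩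
  have hinter : s ∩ -t = -(s ∩ t) := by
    ext x
    rw [mem_neg, mem_inter_iff, mem_inter_iff, mem_neg, ← mem_neg (s := s), hs]
  rw [neg_apply, cond_apply' ht.neg, cond_apply' ht, hinter, measure_neg]

variable [μ.IsNegInvariant] {f : α → ℝ} {c : ℝ}

lemma two_mul_measure_inter_eq (hf : Measurable f) (hodd : f.Odd)
    (hpm : ∀ᵐ x ∂μ, f x = 1 ∨ f x = -1) (hc : c ∈ ({1, -1} : Set ℝ))
    {s : Set α} (hs : -s = s) :
    2 * μ (s ∩ {x | f x = c}) = μ s := by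
  have hflip : -(s ∩ {x | f x = c}) = s ∩ {x | f x = -c} := by
    ext x
    rw [mem_neg, mem_inter_iff, mem_inter_iff, ← mem_neg (s := s), hs]
    simp only [mem_ofPred_eq, hodd x, neg_eq_iff_eq_neg]
  have hcompl : (s \ {x | f x = c} : Set α) =ᵐ[μ] (s ∩ {x | f x = -c} : Set α) := by
    refine hpm.mono fun x hx => propext ?_
    change x ∈ s \ _ ↔ x ∈ s ∩ _
    rcases hc with rfl | rfl <;> rcases hx with hx | hx <;> norm_num [hx]
  calc 2 * μ (s ∩ {x | f x = c})
      = μ (s ∩ {x | f x = c}) + μ (-(s ∩ {x | f x = c})) := by rw [measure_neg, two_mul]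
    _ = μ (s ∩ {x | f x = c}) + μ (s \ {x | f x = c}) := by rw [hflip, measure_congr hcompl]
    _ = μ s := measure_inter_add_sdiff s (hf (measurableSet_singleton c))

variable [IsProbabilityMeasure μ]

lemma measure_odd_eq_half (hf : Measurable f) (hodd : f.Odd)
    (hpm : ∀ᵐ x ∂μ, f x = 1 ∨ f x = -1) (hc : c ∈ ({1, -1} : Set ℝ)) :
    μ {x | f x = c} = 2⁻¹ := by
  have h := two_mul_measure_inter_eq hf hodd hpm hc neg_univ
  rw [univ_inter, measure_univ] at h
  exact ENNReal.eq_inv_of_mul_eq_one_left (by rwa [mul_comm])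

lemma measure_odd_inter_eq_mul (hf : Measurable f) (hodd : f.Odd)
    (hpm : ∀ᵐ x ∂μ, f x = 1 ∨ f x = -1) (hc : c ∈ ({1, -1} : Set ℝ))
    {s : Set α} (hs : -s = s) :
    μ ({x | f x = c} ∩ s) = μ {x | f x = c} * μ s := by
  rw [measure_odd_eq_half hf hodd hpm hc, ← two_mul_measure_inter_eq hf hodd hpm hc hs,
    ← mul_assoc, ENNReal.inv_mul_cancel two_ne_zero ENNReal.ofNat_ne_top, one_mul, inter_comm]

end MeasureTheory.Measure

namespace ProbabilityTheory

instance isNegInvariant_gaussianReal (v : NNReal) : (gaussianReal 0 v).IsNegInvariant :=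
  ⟨by simpa [Measure.neg_def] using gaussianReal_map_neg (μ := 0) (v := v)⟩

lemma ae_ne_zero_gaussianReal (m : ℝ) {v : NNReal} (hv : v ≠ 0) :
    ∀ᵐ x ∂gaussianReal m v, x ≠ 0 :=
  (gaussianReal_absolutelyContinuous m hv).ae_le (compl_mem_ae_iff.2 (measure_singleton 0))

lemma gaussianReal_ne_zero_of_mem_atTop (m : ℝ) {v : NNReal} (hv : v ≠ 0) {s : Set ℝ}
    (hs : s ∈ Filter.atTop) : gaussianReal m v s ≠ 0 := by
  obtain ⟨a, ha⟩ := Filter.mem_atTop_sets.1 hs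
  refine fun h => ?_
  have := gaussianReal_absolutelyContinuous' m hv (measure_mono_null (s := Ici a) ha h)
  simp [Real.volume_Ici] at this

lemma eventually_two_mul_one_sub_cdf_mem_Icc (P : Measure ℝ) {σ ε : ℝ} (hσ : 0 < σ) (hε : 0 < ε) :
    ∀ᶠ z in Filter.atTop, 2 * (1 - cdf P (|z| / σ)) ∈ Icc 0 ε := by
  have hcdf : Filter.Tendsto (fun z => cdf P (|z| / σ)) Filter.atTop (nhds 1) :=
    (tendsto_cdf_atTop P).comp (Filter.tendsto_abs_atTop_atTop.atTop_div_const hσ)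
  filter_upwards [hcdf.eventually (eventually_ge_nhds (by linarith : 1 - ε / 2 < 1))] with z hz
  exact ⟨by linarith [cdf_le_one P (|z| / σ)], by linarith⟩

end ProbabilityTheory

open Measure

theorem sign_independent_of_masked_info_under_point_null_general
    (σ : ℝ) (hσ : 0 < σ)
    (αm lam ν : ℝ) (h1 : 0 < αm)
    (ζ : ℝ)
    (Φ : ℝ → ℝ) (hΦ : Φ = fun z => cdf (gaussianReal 0 1) z)
    (μ : Measure ℝ) (hμ : μ = gaussianReal 0 ((σ ^ 2).toNNReal))
    (pval : ℝ → ℝ) (hp : ∀ z, pval z = 2 * (1 - Φ (|z| / σ)))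
    (bval : ℝ → ℝ) (hb : ∀ z, bval z = if pval z ∈ Icc lam ν then 1 else 0)
    (sval : ℝ → ℝ)
    (hs : ∀ z, sval z = Real.sign z * (if pval z ∈ Icc lam ν then -1 else 1))
    (E : Set ℝ) (hE : E = {z | pval z ∈ Icc (0:ℝ) αm ∪ Icc lam ν}) :
    (∀ s0 ∈ ({1, -1} : Set ℝ), μ[|E] {z | sval z = s0} = ENNReal.ofReal (1 / 2)) ∧
    (∀ A : Set (ℝ × ℝ), MeasurableSet A → ∀ s0 ∈ ({1, -1} : Set ℝ),
      μ[|E] ({z | sval z = s0} ∩ {z | (bval z, maskFun lam ν ζ (pval z)) ∈ A})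
        = μ[|E] {z | sval z = s0} *
            μ[|E] {z | (bval z, maskFun lam ν ζ (pval z)) ∈ A}) := by
  have hv : (σ ^ 2).toNNReal ≠ 0 := by simpa using hσ.ne'
  have hpval : pval.Even := fun z => by rw [hp, hp, abs_neg]
  have hsval : sval.Odd := fun z => by rw [hs, hs, hpval, Real.sign_neg, neg_mul]
  have hpm : Measurable pval := by
    have := (monotone_cdf (gaussianReal 0 1)).measurable
    rw [funext hp, hΦ]
    fun_prop
  have hsm : Measurable sval := by
    rw [funext hs]
    exact Real.measurable_sign.mul (Measurable.ite (hpm measurableSet_Icc) measurable_const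
      measurable_const)
  have hsval_pm : ∀ z ≠ 0, sval z = 1 ∨ sval z = -1 := fun z hz => by
    rw [hs]
    rcases Real.sign_apply_eq_of_ne_zero z hz with h | h <;> split_ifs <;> norm_num [h]
  have hEμ : μ E ≠ 0 := by
    rw [hμ]
    refine gaussianReal_ne_zero_of_mem_atTop 0 hv ?_
    filter_upwards [eventually_two_mul_one_sub_cdf_mem_Icc (gaussianReal 0 1) hσ h1] with z hz
    rw [hE, mem_ofPred_eq, hp, hΦ]
    exact Or.inl hz
  have : μ.IsNegInvariant := hμ ▸ inferInstance
  have : IsProbabilityMeasure μ := hμ ▸ inferInstance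
  have hEsym : -E = E := by
    rw [hE]
    exact hpval.neg_preimage _
  have := cond_isProbabilityMeasure hEμ
  have := IsNegInvariant.cond (μ := μ) hEsym
  have hae : ∀ᵐ z ∂μ[|E], sval z = 1 ∨ sval z = -1 :=
    cond_absolutelyContinuous.ae_le ((hμ ▸ ae_ne_zero_gaussianReal 0 hv).mono hsval_pm)
  have hmask : Function.Even fun z => (bval z, maskFun lam ν ζ (pval z)) := fun z => by
    simp only [hb, hpval z]
  refine ⟨fun s0 hs0 => ?_, fun A _ s0 hs0 => ?_⟩
  · rw [measure_odd_eq_half hsm hsval hae hs0, one_div, ENNReal.ofReal_inv_of_pos two_pos,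
      ENNReal.ofReal_ofNat]
  · exact measure_odd_inter_eq_mul hsm hsval hae hs0 (hmask.neg_preimage A)

theorem sign_independent_of_masked_info_under_point_null
    (σ : ℝ) (hσ : 0 < σ)
    (αm lam ν : ℝ) (h1 : 0 < αm) (h2 : αm ≤ lam) (h3 : lam < ν) (h4 : ν ≤ 1)
    (ζ : ℝ) (hζ : ζ = (ν - lam) / αm)
    (Φ : ℝ → ℝ) (hΦ : Φ = fun z => cdf (gaussianReal 0 1) z)
    (μ : Measure ℝ) (hμ : μ = gaussianReal 0 ((σ ^ 2).toNNReal))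
    (pval : ℝ → ℝ) (hp : ∀ z, pval z = 2 * (1 - Φ (|z| / σ)))
    (bval : ℝ → ℝ) (hb : ∀ z, bval z = if pval z ∈ Icc lam ν then 1 else 0)
    (sval : ℝ → ℝ)
    (hs : ∀ z, sval z = Real.sign z * (if pval z ∈ Icc lam ν then -1 else 1))
    (E : Set ℝ) (hE : E = {z | pval z ∈ Icc (0:ℝ) αm ∪ Icc lam ν}) :
    (∀ s0 ∈ ({1, -1} : Set ℝ), μ[|E] {z | sval z = s0} = ENNReal.ofReal (1 / 2)) ∧
    (∀ A : Set (ℝ × ℝ), MeasurableSet A → ∀ s0 ∈ ({1, -1} : Set ℝ),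
      μ[|E] ({z | sval z = s0} ∩ {z | (bval z, maskFun lam ν ζ (pval z)) ∈ A})
        = μ[|E] {z | sval z = s0} *
            μ[|E] {z | (bval z, maskFun lam ν ζ (pval z)) ∈ A}) :=
  sign_independent_of_masked_info_under_point_null_general σ hσ αm lam ν h1 ζ Φ hΦ μ hμ pval hp bval
    hb sval hs E hE
end
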